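/- arXiv:1408.5947 — 8 statements merged into one kernel-verified Lean document; each statement's English description precedes it below -/
import Mathlib

section
/- Under these hypotheses, the product ∘ makes V = V₀ × ℝ a unital commutative Jordan algebra: e∘u = u for all u ∈ V, the product is commutative, and the Jordan identity u∘(u²∘v) = u²∘(u∘v) holds for all u,v ∈ V (where u² := u∘u). Moreover the algebra is nondegenerate in the sense that if v∘u = 0 for all u ∈ V then v = 0. -/
/-!
The unit and commutativity laws are immediate, and nondegeneracy follows from them since
`v = v ∘ e`. Expanding the Jordan identity for `u = (X, λ)`, `v = (Y, μ)`, everything cancels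
by the total symmetry of the cubic form except the curvature term `R(A(X,X), X) Y`. That term
vanishes: by the pair symmetry of the `(0,4)` curvature tensor it suffices that
`g(R(Y,U)(A(X,X)), X) = 0`, and the `R`-invariance of `A` together with the total symmetry of
`g(A(·,·),·)` and the skew-symmetry of `R(Y,U)` turns this quantity into `-2` times itself.
-/

namespace AffineHypersphere

variable {V₀ : Type*} [AddCommGroup V₀] [Module ℝ V₀]
  {g : V₀ →ₗ[ℝ] V₀ →ₗ[ℝ] ℝ} {A : V₀ →ₗ[ℝ] V₀ →ₗ[ℝ] V₀} {L₁ : ℝ}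
  {R : V₀ → V₀ → Module.End ℝ V₀}

theorem g_A_eq_g_A (hg_symm : ∀ X Y : V₀, g X Y = g Y X) (hA_symm : ∀ X Y : V₀, A X Y = A Y X)
    (hA_cubic : ∀ X Y Z : V₀, g (A X Y) Z = g (A X Z) Y) (X Y Z : V₀) :
    g (A X Y) Z = g X (A Y Z) := by
  rw [hg_symm X (A Y Z), hA_cubic Y Z X, hA_symm Y X]

theorem g_R_apply (hA_cubic : ∀ X Y Z : V₀, g (A X Y) Z = g (A X Z) Y)
    (hR : ∀ X Y Z : V₀,
      R X Y Z = L₁ • (g Y Z • X - g X Z • Y) - A X (A Y Z) + A Y (A X Z))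
    (X Y Z W : V₀) :
    g (R X Y Z) W =
      L₁ * (g Y Z * g X W - g X Z * g Y W) - g (A X W) (A Y Z) + g (A Y W) (A X Z) := by
  simp only [hR, map_sub, map_add, map_smul, LinearMap.sub_apply, LinearMap.add_apply,
    LinearMap.smul_apply, smul_eq_mul, hA_cubic X (A Y Z) W, hA_cubic Y (A X Z) W]

theorem g_R_swap_right (hg_symm : ∀ X Y : V₀, g X Y = g Y X)
    (hA_cubic : ∀ X Y Z : V₀, g (A X Y) Z = g (A X Z) Y)
    (hR : ∀ X Y Z : V₀,
      R X Y Z = L₁ • (g Y Z • X - g X Z • Y) - A X (A Y Z) + A Y (A X Z))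
    (X Y Z W : V₀) :
    g (R X Y Z) W = -g (R X Y W) Z := by
  rw [g_R_apply hA_cubic hR, g_R_apply hA_cubic hR]
  linear_combination hg_symm (A Y W) (A X Z) - hg_symm (A X W) (A Y Z)

theorem g_R_pair_comm (hg_symm : ∀ X Y : V₀, g X Y = g Y X)
    (hA_symm : ∀ X Y : V₀, A X Y = A Y X)
    (hA_cubic : ∀ X Y Z : V₀, g (A X Y) Z = g (A X Z) Y)
    (hR : ∀ X Y Z : V₀,
      R X Y Z = L₁ • (g Y Z • X - g X Z • Y) - A X (A Y Z) + A Y (A X Z))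
    (X Y Z W : V₀) :
    g (R X Y Z) W = g (R Z W X) Y := by
  rw [g_R_apply hA_cubic hR, g_R_apply hA_cubic hR, hA_symm Z Y, hA_symm W X, hA_symm W Y,
    hA_symm Z X, hg_symm (A X W), hg_symm (A Y W)]
  linear_combination L₁ * (g Y Z * hg_symm X W + g W X * hg_symm Y Z
    - g Y W * hg_symm X Z - g Z X * hg_symm Y W)

theorem R_A_self_self_eq_zero (hg_symm : ∀ X Y : V₀, g X Y = g Y X)
    (hg_nondeg : ∀ X : V₀, (∀ Y : V₀, g X Y = 0) → X = 0)
    (hA_symm : ∀ X Y : V₀, A X Y = A Y X)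
    (hA_cubic : ∀ X Y Z : V₀, g (A X Y) Z = g (A X Z) Y)
    (hR : ∀ X Y Z : V₀,
      R X Y Z = L₁ • (g Y Z • X - g X Z • Y) - A X (A Y Z) + A Y (A X Z))
    (hRinv : ∀ X W Y Z : V₀, R Y Z (A X W) = A (R Y Z X) W + A X (R Y Z W))
    (X Y : V₀) :
    R (A X X) X Y = 0 := by
  refine hg_nondeg _ fun U => ?_
  have hself : g (R Y U (A X X)) X = -2 * g (R Y U (A X X)) X :=
    calc g (R Y U (A X X)) X = g (A (R Y U X) X) X + g (A X (R Y U X)) X := by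
          rw [hRinv, map_add, LinearMap.add_apply]
      _ = 2 * g (R Y U X) (A X X) := by
          rw [hA_symm X, g_A_eq_g_A hg_symm hA_symm hA_cubic]; ring
      _ = -2 * g (R Y U (A X X)) X := by
          rw [g_R_swap_right hg_symm hA_cubic hR]; ring
  rw [g_R_pair_comm hg_symm hA_symm hA_cubic hR]
  linarith

variable (g A L₁) in
def affineMul (u v : V₀ × ℝ) : V₀ × ℝ :=
  (A u.1 v.1 + v.2 • u.1 + u.2 • v.1, u.2 * v.2 - L₁ * g u.1 v.1)

theorem affineMul_zero_one (u : V₀ × ℝ) : affineMul g A L₁ (0, 1) u = u := by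
  simp [affineMul]

theorem affineMul_comm (hg_symm : ∀ X Y : V₀, g X Y = g Y X)
    (hA_symm : ∀ X Y : V₀, A X Y = A Y X) (u v : V₀ × ℝ) :
    affineMul g A L₁ u v = affineMul g A L₁ v u := by
  simp only [affineMul, hA_symm u.1, hg_symm u.1, Prod.mk.injEq]
  constructor
  · abel
  · ring

theorem affineMul_jordan (hg_symm : ∀ X Y : V₀, g X Y = g Y X)
    (hA_symm : ∀ X Y : V₀, A X Y = A Y X)
    (hA_cubic : ∀ X Y Z : V₀, g (A X Y) Z = g (A X Z) Y)
    (hcurv : ∀ X Y : V₀, L₁ • (g X Y • A X X - g (A X X) Y • X)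
      - A (A X X) (A X Y) + A X (A (A X X) Y) = 0)
    (u v : V₀ × ℝ) :
    affineMul g A L₁ u (affineMul g A L₁ (affineMul g A L₁ u u) v) =
      affineMul g A L₁ (affineMul g A L₁ u u) (affineMul g A L₁ u v) := by
  obtain ⟨X, lam⟩ := u
  obtain ⟨Y, mu⟩ := v
  have hgA := g_A_eq_g_A hg_symm hA_symm hA_cubic
  simp only [affineMul, map_add, map_smul, LinearMap.add_apply, LinearMap.smul_apply,
    smul_eq_mul, Prod.mk.injEq]
  constructor
  · linear_combination (norm := module) hcurv X Y - mu • hA_symm (A X X) X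
  · have h : g X (A (A X X) Y) = g (A X X) (A X Y) := by rw [← hgA, hA_symm X, hgA]
    linear_combination (-L₁) * h + L₁ * mu * hg_symm (A X X) X

end AffineHypersphere

open AffineHypersphere

theorem statement0_general
    (V₀ : Type*) [AddCommGroup V₀] [Module ℝ V₀]
    (g : V₀ →ₗ[ℝ] V₀ →ₗ[ℝ] ℝ)
    (hg_symm : ∀ X Y : V₀, g X Y = g Y X)
    (hg_nondeg : ∀ X : V₀, (∀ Y : V₀, g X Y = 0) → X = 0)
    (A : V₀ →ₗ[ℝ] V₀ →ₗ[ℝ] V₀)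
    (hA_symm : ∀ X Y : V₀, A X Y = A Y X)
    (hA_cubic : ∀ X Y Z : V₀, g (A X Y) Z = g (A X Z) Y)
    (L₁ : ℝ)
    (R : V₀ → V₀ → Module.End ℝ V₀)
    (hR : ∀ X Y Z : V₀,
      R X Y Z = L₁ • (g Y Z • X - g X Z • Y) - A X (A Y Z) + A Y (A X Z))
    (hRinv : ∀ X W Y Z : V₀,
      R Y Z (A X W) = A (R Y Z X) W + A X (R Y Z W))
    (mul : (V₀ × ℝ) → (V₀ × ℝ) → (V₀ × ℝ))
    (hmul : ∀ (X Y : V₀) (lam mu : ℝ),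
      mul (X, lam) (Y, mu) = (A X Y + mu • X + lam • Y, lam * mu - L₁ * g X Y)) :
    (∀ u : V₀ × ℝ, mul ((0 : V₀), (1 : ℝ)) u = u) ∧
    (∀ u v : V₀ × ℝ, mul u v = mul v u) ∧
    (∀ u v : V₀ × ℝ, mul u (mul (mul u u) v) = mul (mul u u) (mul u v)) ∧
    (∀ v : V₀ × ℝ, (∀ u : V₀ × ℝ, mul v u = 0) → v = 0) := by
  obtain rfl : mul = affineMul g A L₁ := funext₂ fun ⟨X, lam⟩ ⟨Y, mu⟩ => hmul X Y lam mu
  have hcomm := affineMul_comm (L₁ := L₁) hg_symm hA_symm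
  have hcurv : ∀ X Y : V₀, L₁ • (g X Y • A X X - g (A X X) Y • X)
      - A (A X X) (A X Y) + A X (A (A X X) Y) = 0 := fun X Y => by
    rw [← hR]
    exact R_A_self_self_eq_zero hg_symm hg_nondeg hA_symm hA_cubic hR hRinv X Y
  refine ⟨affineMul_zero_one, hcomm, affineMul_jordan hg_symm hA_symm hA_cubic hcurv, ?_⟩
  intro v hv
  rw [← affineMul_zero_one v, hcomm]
  exact hv (0, 1)

/-- The product ∘ on V = V₀ × ℝ built from the Fubini–Pick form `A`,
the affine metric `g` and the affine mean curvature `L₁` makes `V` a unital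
commutative Jordan algebra with unity `e = (0,1)`, and this Jordan algebra is
nondegenerate: if `v ∘ u = 0` for all `u` then `v = 0`. -/
theorem statement0
    (V₀ : Type*) [AddCommGroup V₀] [Module ℝ V₀] [FiniteDimensional ℝ V₀]
    (g : V₀ →ₗ[ℝ] V₀ →ₗ[ℝ] ℝ)
    (hg_symm : ∀ X Y : V₀, g X Y = g Y X)
    (hg_nondeg : ∀ X : V₀, (∀ Y : V₀, g X Y = 0) → X = 0)
    (A : V₀ →ₗ[ℝ] V₀ →ₗ[ℝ] V₀)
    (hA_symm : ∀ X Y : V₀, A X Y = A Y X)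
    (hA_cubic : ∀ X Y Z : V₀, g (A X Y) Z = g (A X Z) Y)
    (L₁ : ℝ)
    (R : V₀ → V₀ → Module.End ℝ V₀)
    (hR : ∀ X Y Z : V₀,
      R X Y Z = L₁ • (g Y Z • X - g X Z • Y) - A X (A Y Z) + A Y (A X Z))
    (hRinv : ∀ X W Y Z : V₀,
      R Y Z (A X W) = A (R Y Z X) W + A X (R Y Z W))
    (mul : (V₀ × ℝ) → (V₀ × ℝ) → (V₀ × ℝ))
    (hmul : ∀ (X Y : V₀) (lam mu : ℝ),
      mul (X, lam) (Y, mu) = (A X Y + mu • X + lam • Y, lam * mu - L₁ * g X Y)) :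
    (∀ u : V₀ × ℝ, mul ((0 : V₀), (1 : ℝ)) u = u) ∧
    (∀ u v : V₀ × ℝ, mul u v = mul v u) ∧
    (∀ u v : V₀ × ℝ, mul u (mul (mul u u) v) = mul (mul u u) (mul u v)) ∧
    (∀ v : V₀ × ℝ, (∀ u : V₀ × ℝ, mul v u = 0) → v = 0) :=
  statement0_general V₀ g hg_symm hg_nondeg A hA_symm hA_cubic L₁ R hR hRinv mul hmul
end

section
/- Under these hypotheses, with n := dim V₀ and ⟨u,v⟩ := tr(T_{u∘v}) where T_w ∈ End(V) is T_w(u) := w∘u, one has for all X,Y ∈ V₀: ⟨(X,0),(Y,0)⟩ = −(n+1)L₁·g(X,Y), ⟨(X,0),e⟩ = 0, and ⟨e,e⟩ = n+1. In particular, the symmetric bilinear form ⟨·,·⟩ on V is nondegenerate if and only if L₁ ≠ 0. -/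
/-!
The multiplication operator `T_(W, c)` has diagonal blocks `A W + c • id` on `V₀` and `c` on `ℝ`,
so by apolarity its trace is `(n + 1) c`. Hence `⟨(X, λ), (Y, μ)⟩ = (n + 1)(λμ - L₁ g(X, Y))`, and
this form is nondegenerate iff `L₁ ≠ 0` because `g` is.
-/

open LinearMap Module

theorem LinearMap.trace_prod_eq_add {R M N : Type*} [CommRing R]
    [AddCommGroup M] [Module R M] [Module.Free R M] [Module.Finite R M]
    [AddCommGroup N] [Module R N] [Module.Free R N] [Module.Finite R N]
    (f : (M × N) →ₗ[R] (M × N)) :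
    trace R (M × N) f =
      trace R M (fst R M N ∘ₗ f ∘ₗ inl R M N) + trace R N (snd R M N ∘ₗ f ∘ₗ inr R M N) := by
  have hsplit : f = inl R M N ∘ₗ (fst R M N ∘ₗ f) + inr R M N ∘ₗ (snd R M N ∘ₗ f) := by
    ext v <;> simp
  conv_lhs => rw [hsplit]
  rw [map_add, trace_comp_comm' (fst R M N ∘ₗ f), trace_comp_comm' (snd R M N ∘ₗ f)]
  rfl

section JordanProduct

variable {V₀ : Type*} [AddCommGroup V₀] [Module ℝ V₀] [FiniteDimensional ℝ V₀]
  {g : V₀ →ₗ[ℝ] V₀ →ₗ[ℝ] ℝ} {A : V₀ →ₗ[ℝ] V₀ →ₗ[ℝ] V₀} {L₁ : ℝ}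
  {mul : (V₀ × ℝ) →ₗ[ℝ] (V₀ × ℝ) →ₗ[ℝ] (V₀ × ℝ)}

theorem trace_mul_left_eq (hA_apolar : ∀ X : V₀, trace ℝ V₀ (A X) = 0)
    (hmul : ∀ (X Y : V₀) (lam mu : ℝ),
      mul (X, lam) (Y, mu) = (A X Y + mu • X + lam • Y, lam * mu - L₁ * g X Y))
    (W : V₀) (c : ℝ) :
    trace ℝ (V₀ × ℝ) (mul (W, c)) = ((finrank ℝ V₀ : ℝ) + 1) * c := by
  have hV₀ : fst ℝ V₀ ℝ ∘ₗ mul (W, c) ∘ₗ inl ℝ V₀ ℝ = A W + c • LinearMap.id := by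
    ext X
    simp [hmul W X c 0]
  have hℝ : snd ℝ V₀ ℝ ∘ₗ mul (W, c) ∘ₗ inr ℝ V₀ ℝ = c • LinearMap.id := by
    ext
    simp [hmul W 0 c 1]
  rw [trace_prod_eq_add, hV₀, hℝ, map_add, hA_apolar]
  simp only [map_smul, trace_id, finrank_self, smul_eq_mul]
  push_cast
  ring

theorem trace_mul_mul_eq (hA_apolar : ∀ X : V₀, trace ℝ V₀ (A X) = 0)
    (hmul : ∀ (X Y : V₀) (lam mu : ℝ),
      mul (X, lam) (Y, mu) = (A X Y + mu • X + lam • Y, lam * mu - L₁ * g X Y))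
    (X Y : V₀) (lam mu : ℝ) :
    trace ℝ (V₀ × ℝ) (mul (mul (X, lam) (Y, mu)))
      = ((finrank ℝ V₀ : ℝ) + 1) * (lam * mu - L₁ * g X Y) := by
  rw [hmul, trace_mul_left_eq hA_apolar hmul]

end JordanProduct

/-- For `L₁ = 0` every `(X, 0)` lies in the kernel. -/
theorem nondegenerate_iff_ne_zero_of_eq_smul {V₀ : Type*} [AddCommGroup V₀] [Module ℝ V₀]
    [Nontrivial V₀] {g : V₀ →ₗ[ℝ] V₀ →ₗ[ℝ] ℝ} (hg_nondeg : ∀ X : V₀, (∀ Y : V₀, g X Y = 0) → X = 0)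
    {L₁ k : ℝ} (hk : k ≠ 0) {B : V₀ × ℝ → V₀ × ℝ → ℝ}
    (hB : ∀ (X Y : V₀) (lam mu : ℝ), B (X, lam) (Y, mu) = k * (lam * mu - L₁ * g X Y)) :
    (∀ u, (∀ v, B u v = 0) → u = 0) ↔ L₁ ≠ 0 := by
  constructor
  · intro hB_nondeg hL
    obtain ⟨X, hX⟩ := exists_ne (0 : V₀)
    have hker : (X, (0 : ℝ)) = 0 := hB_nondeg _ fun ⟨Y, mu⟩ => by simp [hB, hL]
    exact hX congr(Prod.fst $hker)
  · rintro hL ⟨X, lam⟩ hker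
    have hlam : lam = 0 := by simpa [hB, hk] using hker (0, 1)
    have hX : X = 0 := hg_nondeg X fun Y => by simpa [hB, hk, hL, hlam] using hker (Y, 0)
    simp [hX, hlam]

theorem statement1_general
    (V₀ : Type*) [AddCommGroup V₀] [Module ℝ V₀] [FiniteDimensional ℝ V₀]
    [Nontrivial V₀]
    (g : V₀ →ₗ[ℝ] V₀ →ₗ[ℝ] ℝ)
    (hg_nondeg : ∀ X : V₀, (∀ Y : V₀, g X Y = 0) → X = 0)
    (A : V₀ →ₗ[ℝ] V₀ →ₗ[ℝ] V₀)
    (hA_apolar : ∀ X : V₀, LinearMap.trace ℝ V₀ (A X) = 0)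
    (L₁ : ℝ)
    (mul : (V₀ × ℝ) →ₗ[ℝ] (V₀ × ℝ) →ₗ[ℝ] (V₀ × ℝ))
    (hmul : ∀ (X Y : V₀) (lam mu : ℝ),
      mul (X, lam) (Y, mu) = (A X Y + mu • X + lam • Y, lam * mu - L₁ * g X Y)) :
    (∀ X Y : V₀,
      LinearMap.trace ℝ (V₀ × ℝ) (mul (mul (X, (0 : ℝ)) (Y, (0 : ℝ))))
        = -((Module.finrank ℝ V₀ : ℝ) + 1) * L₁ * g X Y) ∧
    (∀ X : V₀,
      LinearMap.trace ℝ (V₀ × ℝ) (mul (mul (X, (0 : ℝ)) ((0 : V₀), (1 : ℝ)))) = 0) ∧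
    (LinearMap.trace ℝ (V₀ × ℝ) (mul (mul ((0 : V₀), (1 : ℝ)) ((0 : V₀), (1 : ℝ))))
        = (Module.finrank ℝ V₀ : ℝ) + 1) ∧
    ((∀ u : V₀ × ℝ,
        (∀ v : V₀ × ℝ, LinearMap.trace ℝ (V₀ × ℝ) (mul (mul u v)) = 0) → u = 0)
      ↔ L₁ ≠ 0) := by
  have htrace := trace_mul_mul_eq hA_apolar hmul
  refine ⟨fun X Y => by rw [htrace]; ring, fun X => by simp [htrace], by simp [htrace], ?_⟩
  exact nondegenerate_iff_ne_zero_of_eq_smul hg_nondeg (by positivity) htrace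

/-- For the Jordan product on `V = V₀ × ℝ` built from the Fubini–Pick
form `A` (satisfying apolarity), the metric `g` and the constant `L₁`, the trace
form `⟨u,v⟩ = tr T_{u∘v}` satisfies `⟨X,Y⟩ = -(n+1)L₁ g(X,Y)`, `⟨X,e⟩ = 0` and
`⟨e,e⟩ = n+1` (with `n = dim V₀`); in particular it is nondegenerate iff `L₁ ≠ 0`. -/
theorem statement1
    (V₀ : Type*) [AddCommGroup V₀] [Module ℝ V₀] [FiniteDimensional ℝ V₀]
    [Nontrivial V₀]
    (g : V₀ →ₗ[ℝ] V₀ →ₗ[ℝ] ℝ)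
    (hg_symm : ∀ X Y : V₀, g X Y = g Y X)
    (hg_nondeg : ∀ X : V₀, (∀ Y : V₀, g X Y = 0) → X = 0)
    (A : V₀ →ₗ[ℝ] V₀ →ₗ[ℝ] V₀)
    (hA_symm : ∀ X Y : V₀, A X Y = A Y X)
    (hA_cubic : ∀ X Y Z : V₀, g (A X Y) Z = g (A X Z) Y)
    (hA_apolar : ∀ X : V₀, LinearMap.trace ℝ V₀ (A X) = 0)
    (L₁ : ℝ)
    (mul : (V₀ × ℝ) →ₗ[ℝ] (V₀ × ℝ) →ₗ[ℝ] (V₀ × ℝ))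
    (hmul : ∀ (X Y : V₀) (lam mu : ℝ),
      mul (X, lam) (Y, mu) = (A X Y + mu • X + lam • Y, lam * mu - L₁ * g X Y)) :
    (∀ X Y : V₀,
      LinearMap.trace ℝ (V₀ × ℝ) (mul (mul (X, (0 : ℝ)) (Y, (0 : ℝ))))
        = -((Module.finrank ℝ V₀ : ℝ) + 1) * L₁ * g X Y) ∧
    (∀ X : V₀,
      LinearMap.trace ℝ (V₀ × ℝ) (mul (mul (X, (0 : ℝ)) ((0 : V₀), (1 : ℝ)))) = 0) ∧
    (LinearMap.trace ℝ (V₀ × ℝ) (mul (mul ((0 : V₀), (1 : ℝ)) ((0 : V₀), (1 : ℝ))))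
        = (Module.finrank ℝ V₀ : ℝ) + 1) ∧
    ((∀ u : V₀ × ℝ,
        (∀ v : V₀ × ℝ, LinearMap.trace ℝ (V₀ × ℝ) (mul (mul u v)) = 0) → u = 0)
      ↔ L₁ ≠ 0) :=
  statement1_general V₀ g hg_nondeg A hA_apolar L₁ mul hmul
end

section
/- Under these hypotheses, for all X,Y,Z ∈ V₀ one has (X,0)∘((Y,0)∘(Z,0)) − (Y,0)∘((X,0)∘(Z,0)) = (−R(X,Y)Z, 0); moreover (X,0)∘((Y,0)∘(0,μ)) − (Y,0)∘((X,0)∘(0,μ)) = 0 for all μ ∈ ℝ. That is, the commutator ⁅T_{(X,0)}, T_{(Y,0)}⁆ of multiplication operators equals −R(X,Y) extended to V by R(X,Y)e = 0. -/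
section JordanProduct

variable {K V : Type*} [CommRing K] [AddCommGroup V] [Module K V]
  {g : V →ₗ[K] V →ₗ[K] K} {A : V →ₗ[K] V →ₗ[K] V} {c : K}
  {R : V → V → Module.End K V} {mul : (V × K) →ₗ[K] (V × K) →ₗ[K] (V × K)}

theorem apply_cubicForm_comm (hg_symm : ∀ X Y : V, g X Y = g Y X)
    (hA_symm : ∀ X Y : V, A X Y = A Y X) (hA_cubic : ∀ X Y Z : V, g (A X Y) Z = g (A X Z) Y)
    (X Y Z : V) : g X (A Y Z) = g Y (A X Z) := by
  rw [hg_symm, hA_cubic, hA_symm Y X, hA_cubic, hg_symm]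

/-- The `e`-component cancels by total symmetry of the cubic form `g (A · ·) ·`. -/
theorem mul_mul_sub_mul_mul_eq_neg_curvature (hg_symm : ∀ X Y : V, g X Y = g Y X)
    (hA_symm : ∀ X Y : V, A X Y = A Y X) (hA_cubic : ∀ X Y Z : V, g (A X Y) Z = g (A X Z) Y)
    (hR : ∀ X Y Z : V, R X Y Z = c • (g Y Z • X - g X Z • Y) - A X (A Y Z) + A Y (A X Z))
    (hmul : ∀ (X Y : V) (lam mu : K),
      mul (X, lam) (Y, mu) = (A X Y + mu • X + lam • Y, lam * mu - c * g X Y))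
    (X Y Z : V) (mu : K) :
    mul (X, 0) (mul (Y, 0) (Z, mu)) - mul (Y, 0) (mul (X, 0) (Z, mu)) = (-(R X Y Z), 0) := by
  simp only [hmul, hR, zero_smul, add_zero, zero_mul, zero_sub, map_add, map_smul, neg_smul]
  ext
  · simp only [Prod.fst_sub, hA_symm Y X]
    module
  · simp only [Prod.snd_sub, apply_cubicForm_comm hg_symm hA_symm hA_cubic X Y Z, hg_symm Y X]
    ring

theorem lie_mul_eq_neg_curvature_comp_fst (hg_symm : ∀ X Y : V, g X Y = g Y X)
    (hA_symm : ∀ X Y : V, A X Y = A Y X) (hA_cubic : ∀ X Y Z : V, g (A X Y) Z = g (A X Z) Y)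
    (hR : ∀ X Y Z : V, R X Y Z = c • (g Y Z • X - g X Z • Y) - A X (A Y Z) + A Y (A X Z))
    (hmul : ∀ (X Y : V) (lam mu : K),
      mul (X, lam) (Y, mu) = (A X Y + mu • X + lam • Y, lam * mu - c * g X Y))
    (X Y : V) :
    ⁅(mul (X, 0) : Module.End K (V × K)), (mul (Y, 0) : Module.End K (V × K))⁆
      = LinearMap.prod ((-(R X Y) : V →ₗ[K] V).comp (LinearMap.fst K V K)) 0 := by
  refine LinearMap.ext fun ⟨Z, mu⟩ => ?_
  rw [LieRing.of_associative_ring_bracket]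
  simpa using mul_mul_sub_mul_mul_eq_neg_curvature hg_symm hA_symm hA_cubic hR hmul X Y Z mu

end JordanProduct

theorem statement2_general
    (V₀ : Type*) [AddCommGroup V₀] [Module ℝ V₀]
    (g : V₀ →ₗ[ℝ] V₀ →ₗ[ℝ] ℝ)
    (hg_symm : ∀ X Y : V₀, g X Y = g Y X)
    (A : V₀ →ₗ[ℝ] V₀ →ₗ[ℝ] V₀)
    (hA_symm : ∀ X Y : V₀, A X Y = A Y X)
    (hA_cubic : ∀ X Y Z : V₀, g (A X Y) Z = g (A X Z) Y)
    (L₁ : ℝ)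
    (R : V₀ → V₀ → Module.End ℝ V₀)
    (hR : ∀ X Y Z : V₀,
      R X Y Z = L₁ • (g Y Z • X - g X Z • Y) - A X (A Y Z) + A Y (A X Z))
    (mul : (V₀ × ℝ) →ₗ[ℝ] (V₀ × ℝ) →ₗ[ℝ] (V₀ × ℝ))
    (hmul : ∀ (X Y : V₀) (lam mu : ℝ),
      mul (X, lam) (Y, mu) = (A X Y + mu • X + lam • Y, lam * mu - L₁ * g X Y)) :
    (∀ X Y Z : V₀,
      mul (X, (0 : ℝ)) (mul (Y, (0 : ℝ)) (Z, (0 : ℝ)))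
          - mul (Y, (0 : ℝ)) (mul (X, (0 : ℝ)) (Z, (0 : ℝ)))
        = (-(R X Y Z), (0 : ℝ))) ∧
    (∀ (X Y : V₀) (mu : ℝ),
      mul (X, (0 : ℝ)) (mul (Y, (0 : ℝ)) ((0 : V₀), mu))
          - mul (Y, (0 : ℝ)) (mul (X, (0 : ℝ)) ((0 : V₀), mu))
        = (0 : V₀ × ℝ)) ∧
    (∀ X Y : V₀,
      ⁅(mul (X, (0 : ℝ)) : Module.End ℝ (V₀ × ℝ)),
        (mul (Y, (0 : ℝ)) : Module.End ℝ (V₀ × ℝ))⁆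
        = LinearMap.prod ((-(R X Y) : V₀ →ₗ[ℝ] V₀).comp (LinearMap.fst ℝ V₀ ℝ))
            (0 : (V₀ × ℝ) →ₗ[ℝ] ℝ)) := by
  have commutator := mul_mul_sub_mul_mul_eq_neg_curvature hg_symm hA_symm hA_cubic hR hmul
  refine ⟨fun X Y Z => commutator X Y Z 0, fun X Y mu => ?_,
    lie_mul_eq_neg_curvature_comp_fst hg_symm hA_symm hA_cubic hR hmul⟩
  simpa [Prod.zero_eq_mk] using commutator X Y 0 mu

/-- For the Jordan product on `V = V₀ × ℝ` built from `A`, `g`, `L₁`,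
the commutator of multiplication operators satisfies
`⁅T_{(X,0)}, T_{(Y,0)}⁆ = -R(X,Y)` extended to `V` by `R(X,Y)e = 0`, where
`R(X,Y)Z = L₁(g(Y,Z)X - g(X,Z)Y) - A(X,A(Y,Z)) + A(Y,A(X,Z))`. -/
theorem statement2
    (V₀ : Type*) [AddCommGroup V₀] [Module ℝ V₀] [FiniteDimensional ℝ V₀]
    (g : V₀ →ₗ[ℝ] V₀ →ₗ[ℝ] ℝ)
    (hg_symm : ∀ X Y : V₀, g X Y = g Y X)
    (hg_nondeg : ∀ X : V₀, (∀ Y : V₀, g X Y = 0) → X = 0)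
    (A : V₀ →ₗ[ℝ] V₀ →ₗ[ℝ] V₀)
    (hA_symm : ∀ X Y : V₀, A X Y = A Y X)
    (hA_cubic : ∀ X Y Z : V₀, g (A X Y) Z = g (A X Z) Y)
    (L₁ : ℝ)
    (R : V₀ → V₀ → Module.End ℝ V₀)
    (hR : ∀ X Y Z : V₀,
      R X Y Z = L₁ • (g Y Z • X - g X Z • Y) - A X (A Y Z) + A Y (A X Z))
    (mul : (V₀ × ℝ) →ₗ[ℝ] (V₀ × ℝ) →ₗ[ℝ] (V₀ × ℝ))
    (hmul : ∀ (X Y : V₀) (lam mu : ℝ),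
      mul (X, lam) (Y, mu) = (A X Y + mu • X + lam • Y, lam * mu - L₁ * g X Y)) :
    (∀ X Y Z : V₀,
      mul (X, (0 : ℝ)) (mul (Y, (0 : ℝ)) (Z, (0 : ℝ)))
          - mul (Y, (0 : ℝ)) (mul (X, (0 : ℝ)) (Z, (0 : ℝ)))
        = (-(R X Y Z), (0 : ℝ))) ∧
    (∀ (X Y : V₀) (mu : ℝ),
      mul (X, (0 : ℝ)) (mul (Y, (0 : ℝ)) ((0 : V₀), mu))
          - mul (Y, (0 : ℝ)) (mul (X, (0 : ℝ)) ((0 : V₀), mu))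
        = (0 : V₀ × ℝ)) ∧
    (∀ X Y : V₀,
      ⁅(mul (X, (0 : ℝ)) : Module.End ℝ (V₀ × ℝ)),
        (mul (Y, (0 : ℝ)) : Module.End ℝ (V₀ × ℝ))⁆
        = LinearMap.prod ((-(R X Y) : V₀ →ₗ[ℝ] V₀).comp (LinearMap.fst ℝ V₀ ℝ))
            (0 : (V₀ × ℝ) →ₗ[ℝ] ℝ)) :=
  statement2_general V₀ g hg_symm A hA_symm hA_cubic L₁ R hR mul hmul
end

section
/- Let J be a real commutative Jordan algebra with unity e, and let 𝔨 be the Lie subalgebra of gl(J) generated by {⁅L_u,L_v⁆ : u,v ∈ J}. Then for every Φ ∈ 𝔨 and every u ∈ J, ⁅Φ, L_u⁆ = L_{Φ(u)} as endomorphisms of J. -/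
/-!
A direct computation shows `⁅Φ, L_u⁆ = L_{Φ u}` for all `u` exactly when `Φ` is a derivation of
the product, and derivations form a Lie subalgebra of `gl(J)`. So it suffices to check that each
generator `⁅L_a, L_b⁆` is a derivation, which is the linearized Jordan identity.
-/

attribute [local instance 100] LieRing.ofAssociativeRing

namespace JordanBilinear

variable {R J : Type*} [CommRing R] [AddCommGroup J] [Module R J]
  (mul : J →ₗ[R] J →ₗ[R] J)

/-- The derivations of `mul`: `⁅Φ, L_u⁆ v = Φ (u v) - u (Φ v)`. -/
def derivationSubalgebra : LieSubalgebra R (Module.End R J) where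
  carrier := {Φ | ∀ u, ⁅Φ, mul u⁆ = mul (Φ u)}
  add_mem' {Φ Ψ} hΦ hΨ u := by simp only [add_lie, LinearMap.add_apply, map_add, hΦ u, hΨ u]
  zero_mem' u := by simp only [zero_lie, LinearMap.zero_apply, map_zero]
  smul_mem' t Φ hΦ u := by simp only [smul_lie, LinearMap.smul_apply, map_smul, hΦ u]
  lie_mem' {Φ Ψ} hΦ hΨ u := by
    rw [lie_lie, hΨ u, hΦ u, hΦ (Ψ u), hΨ (Φ u)]
    simp only [Ring.lie_def, Module.End.mul_apply, LinearMap.sub_apply, map_sub]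

variable {mul} (hcomm : ∀ u v, mul u v = mul v u)
  (hjordan : ∀ u v, mul u (mul (mul u u) v) = mul (mul u u) (mul u v))
include hcomm hjordan

theorem jordan_linearized [Invertible (2 : R)] (a b c d : J) :
    mul a (mul (mul b c) d) + mul b (mul (mul a c) d) + mul c (mul (mul a b) d) =
      mul (mul b c) (mul a d) + mul (mul a c) (mul b d) + mul (mul a b) (mul c d) := by
  set S := mul a (mul (mul b c) d) + mul b (mul (mul a c) d) + mul c (mul (mul a b) d) -
    (mul (mul b c) (mul a d) + mul (mul a c) (mul b d) + mul (mul a b) (mul c d))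
  -- inclusion–exclusion over `a + b + c` isolates the part of the cubic identity
  -- that is trilinear in `a, b, c`
  have two_smul_S : (2 : R) • S = 0 := by
    have h₁ := hjordan (a + b + c) d
    have h₂ := hjordan (a + b) d
    have h₃ := hjordan (a + c) d
    have h₄ := hjordan (b + c) d
    have h₅ := hjordan a d
    have h₆ := hjordan b d
    have h₇ := hjordan c d
    simp only [map_add, LinearMap.add_apply] at h₁ h₂ h₃ h₄
    simp only [S, two_smul, hcomm] at h₁ h₂ h₃ h₄ h₅ h₆ h₇ ⊢
    linear_combination (norm := abel) h₁ - h₂ - h₃ - h₄ + h₅ + h₆ + h₇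
  have S_eq_zero : S = 0 := by
    rw [← one_smul R S, ← invOf_mul_self (2 : R), mul_smul, two_smul_S, smul_zero]
  exact sub_eq_zero.mp S_eq_zero

theorem lie_lie_mul_eq_mul_lie_apply [Invertible (2 : R)] (a b c : J) :
    ⁅⁅mul a, mul b⁆, mul c⁆ = mul (⁅mul a, mul b⁆ c) := by
  ext d
  have hac := jordan_linearized hcomm hjordan a c d b
  have hbc := jordan_linearized hcomm hjordan b c d a
  simp only [Ring.lie_def, LinearMap.sub_apply, Module.End.mul_apply, map_sub] at hac hbc ⊢
  simp only [hcomm] at hac hbc ⊢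
  linear_combination (norm := abel) hac - hbc

theorem lieSpan_lie_mul_le_derivationSubalgebra [Invertible (2 : R)] :
    LieSubalgebra.lieSpan R (Module.End R J) {f | ∃ u v, f = ⁅mul u, mul v⁆} ≤
      derivationSubalgebra mul := by
  rw [LieSubalgebra.lieSpan_le]
  rintro _ ⟨a, b, rfl⟩ c
  exact lie_lie_mul_eq_mul_lie_apply hcomm hjordan a b c

end JordanBilinear

theorem statement9_general
    (J : Type*) [AddCommGroup J] [Module ℝ J]
    (mul : J →ₗ[ℝ] J →ₗ[ℝ] J)
    (hcomm : ∀ u v : J, mul u v = mul v u)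
    (hjordan : ∀ u v : J, mul u (mul (mul u u) v) = mul (mul u u) (mul u v)) :
    ∀ Φ ∈ LieSubalgebra.lieSpan ℝ (Module.End ℝ J)
        {f : Module.End ℝ J | ∃ u v : J,
          f = ⁅(mul u : Module.End ℝ J), (mul v : Module.End ℝ J)⁆},
      ∀ u : J, ⁅Φ, (mul u : Module.End ℝ J)⁆ = mul (Φ u) := by
  have : Invertible (2 : ℝ) := invertibleOfNonzero two_ne_zero
  intro Φ hΦ
  exact JordanBilinear.lieSpan_lie_mul_le_derivationSubalgebra hcomm hjordan hΦ

/-- In a unital real commutative Jordan algebra, for every `Φ` in the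
Lie subalgebra 𝔨 of `gl(J)` generated by the commutators `⁅L_u,L_v⁆` and every
`u ∈ J`, one has `⁅Φ, L_u⁆ = L_{Φ(u)}`. -/
theorem statement9
    (J : Type*) [AddCommGroup J] [Module ℝ J]
    (mul : J →ₗ[ℝ] J →ₗ[ℝ] J)
    (hcomm : ∀ u v : J, mul u v = mul v u)
    (hjordan : ∀ u v : J, mul u (mul (mul u u) v) = mul (mul u u) (mul u v))
    (e : J) (he : ∀ v : J, mul e v = v) :
    ∀ Φ ∈ LieSubalgebra.lieSpan ℝ (Module.End ℝ J)
        {f : Module.End ℝ J | ∃ u v : J,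
          f = ⁅(mul u : Module.End ℝ J), (mul v : Module.End ℝ J)⁆},
      ∀ u : J, ⁅Φ, (mul u : Module.End ℝ J)⁆ = mul (Φ u) :=
  statement9_general J mul hcomm hjordan
end

section
/- Let J be a finite-dimensional semisimple real commutative Jordan algebra with unity e, V₀ := {u ∈ J : tr(L_u) = 0}, 𝔭 := {L_X : X ∈ V₀}, 𝔨 the Lie subalgebra of gl(J) generated by {⁅L_X,L_Y⁆ : X,Y ∈ V₀}, and 𝔤 := 𝔨 + 𝔭 (the restricted structure Lie algebra). Then 𝔤 is a Lie subalgebra of gl(J) with ⁅𝔨,𝔭⁆ ⊆ 𝔭, ⁅𝔭,𝔭⁆ ⊆ 𝔨 and 𝔨 ∩ 𝔭 = {0}, so (𝔤,𝔨) is a symmetric pair of Lie algebras; moreover the pair is effective: every Lie ideal of 𝔤 contained in 𝔨 is zero. -/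
attribute [local instance 100] LieRing.ofAssociativeRing

/-!
The commutators `⁅L_X, L_Y⁆` are derivations of the Jordan product (this is the linearized
Jordan identity) and kill the unit `e`, so every `D ∈ 𝔨` is such a derivation:
`⁅D, L_b⁆ = L_{D b}`. As commutators are traceless, this gives `⁅𝔨, 𝔭⁆ ⊆ 𝔭`, and an `L_X ∈ 𝔨`
has `X = L_X e = 0`, so `𝔨 ∩ 𝔭 = 0`. For `D` in an ideal `𝔥 ⊆ 𝔨`, `⁅L_X, D⁆ = -L_{D X}` lies in
`𝔨 ∩ 𝔭`, so `D` kills `V₀`; it also kills `e`, and `J = V₀ ⊕ ℝ e` because `tr L_e = dim J ≠ 0`.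
-/

section SymmetricPair

variable {R L : Type*} [CommRing R] [LieRing L] [LieAlgebra R L]
  {𝔨 : LieSubalgebra R L} {𝔭 : Submodule R L}

theorem lie_mem_sup_of_lie_mem (hkp : ∀ k ∈ 𝔨, ∀ p ∈ 𝔭, ⁅k, p⁆ ∈ 𝔭)
    (hpp : ∀ p ∈ 𝔭, ∀ q ∈ 𝔭, ⁅p, q⁆ ∈ 𝔨) {f g : L}
    (hf : f ∈ 𝔨.toSubmodule ⊔ 𝔭) (hg : g ∈ 𝔨.toSubmodule ⊔ 𝔭) :
    ⁅f, g⁆ ∈ 𝔨.toSubmodule ⊔ 𝔭 := by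
  obtain ⟨k, hk, p, hp, rfl⟩ := Submodule.mem_sup.mp hf
  obtain ⟨k', hk', p', hp', rfl⟩ := Submodule.mem_sup.mp hg
  have hsplit : ⁅k + p, k' + p'⁆ = (⁅k, k'⁆ + ⁅p, p'⁆) + (⁅k, p'⁆ - ⁅k', p⁆) := by
    rw [← lie_skew k' p]
    simp only [lie_add, add_lie]
    abel
  rw [hsplit]
  exact Submodule.add_mem_sup (𝔨.add_mem (𝔨.lie_mem hk hk') (hpp p hp p' hp'))
    (𝔭.sub_mem (hkp k hk p' hp') (hkp k' hk' p hp))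

theorem eq_bot_of_forall_mem_of_lie_mem (hkp : ∀ k ∈ 𝔨, ∀ p ∈ 𝔭, ⁅k, p⁆ ∈ 𝔭)
    (hdisj : ∀ f ∈ 𝔨, f ∈ 𝔭 → f = 0)
    (hcent : ∀ k ∈ 𝔨, (∀ p ∈ 𝔭, ⁅p, k⁆ = 0) → k = 0)
    {𝔥 : Submodule R L} (h𝔥k : ∀ h ∈ 𝔥, h ∈ 𝔨)
    (h𝔥 : ∀ f ∈ 𝔨.toSubmodule ⊔ 𝔭, ∀ h ∈ 𝔥, ⁅f, h⁆ ∈ 𝔥) : 𝔥 = ⊥ := by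
  refine (Submodule.eq_bot_iff 𝔥).mpr fun h hh => hcent h (h𝔥k h hh) fun p hp => ?_
  have hph : ⁅p, h⁆ ∈ 𝔥 := h𝔥 p (Submodule.mem_sup_right hp) h hh
  refine hdisj _ (h𝔥k _ hph) ?_
  rw [← lie_skew]
  exact 𝔭.neg_mem (hkp h (h𝔥k h hh) p hp)

end SymmetricPair

section JordanAlgebra

variable {K J : Type*} [Field K] [AddCommGroup J] [Module K J] (mul : J →ₗ[K] J →ₗ[K] J)

theorem jordan_linearized [CharZero K] (hcomm : ∀ u v : J, mul u v = mul v u)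
    (hjordan : ∀ u v : J, mul u (mul (mul u u) v) = mul (mul u u) (mul u v))
    (a b c v : J) :
    mul a (mul (mul b c) v) + mul b (mul (mul a c) v) + mul c (mul (mul a b) v)
      = mul (mul b c) (mul a v) + mul (mul a c) (mul b v) + mul (mul a b) (mul c v) := by
  have habc := hjordan (a + b + c) v
  have hab := hjordan (a + b) v
  have hbc := hjordan (b + c) v
  have hac := hjordan (a + c) v
  simp only [map_add, LinearMap.add_apply, hcomm b a, hcomm c a, hcomm c b]
    at habc hab hbc hac
  apply smul_right_injective J (two_ne_zero (α := K))
  simp only [smul_add]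
  linear_combination (norm := module)
    habc - hab - hbc - hac + hjordan a v + hjordan b v + hjordan c v

theorem lie_lie_mul_eq_mul_lie_apply [CharZero K] (hcomm : ∀ u v : J, mul u v = mul v u)
    (hjordan : ∀ u v : J, mul u (mul (mul u u) v) = mul (mul u u) (mul u v))
    (x y b : J) :
    ⁅⁅(mul x : Module.End K J), mul y⁆, mul b⁆ = mul (⁅(mul x : Module.End K J), mul y⁆ b) := by
  ext c
  simp only [Ring.lie_def, LinearMap.sub_apply, Module.End.mul_apply, map_sub]
  have hx := jordan_linearized mul hcomm hjordan x b c y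
  have hy := jordan_linearized mul hcomm hjordan y b c x
  simp only [hcomm] at hx hy ⊢
  linear_combination (norm := module) hx - hy

/-- For a commutative product, `⁅D, L_b⁆ = L_{D b}` for all `b` says that `D` is a derivation. -/
def derivationsKilling (e : J) : LieSubalgebra K (Module.End K J) where
  carrier := {D | (∀ b : J, ⁅D, (mul b : Module.End K J)⁆ = mul (D b)) ∧ D e = 0}
  add_mem' := by
    rintro D D' ⟨hD, hDe⟩ ⟨hD', hD'e⟩
    exact ⟨fun b => by rw [add_lie, hD, hD', LinearMap.add_apply, map_add],
      by rw [LinearMap.add_apply, hDe, hD'e, add_zero]⟩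
  zero_mem' := ⟨fun b => by rw [zero_lie, LinearMap.zero_apply, map_zero], rfl⟩
  smul_mem' := by
    rintro r D ⟨hD, hDe⟩
    exact ⟨fun b => by rw [smul_lie, hD, LinearMap.smul_apply, map_smul],
      by rw [LinearMap.smul_apply, hDe, smul_zero]⟩
  lie_mem' := by
    rintro D D' ⟨hD, hDe⟩ ⟨hD', hD'e⟩
    refine ⟨fun b => ?_, by simp [Ring.lie_def, hDe, hD'e]⟩
    rw [lie_lie, hD, hD', hD, hD', ← map_sub]
    rfl

variable {mul}

theorem lie_mul_mem_derivationsKilling [CharZero K] (hcomm : ∀ u v : J, mul u v = mul v u)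
    (hjordan : ∀ u v : J, mul u (mul (mul u u) v) = mul (mul u u) (mul u v))
    {e : J} (he : ∀ v : J, mul e v = v) (x y : J) :
    ⁅(mul x : Module.End K J), mul y⁆ ∈ derivationsKilling mul e := by
  refine ⟨lie_lie_mul_eq_mul_lie_apply mul hcomm hjordan x y, ?_⟩
  simp [Ring.lie_def, hcomm _ e, he, hcomm x y]

theorem trace_mul_apply_eq_zero {e : J} {D : Module.End K J} (hD : D ∈ derivationsKilling mul e)
    (b : J) :
    LinearMap.trace K J (mul (D b)) = 0 := by
  rw [← hD.1 b, LinearMap.trace_lie]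

theorem eq_zero_of_mul_eq_zero {e : J} (he : ∀ v : J, mul e v = v)
    (hcomm : ∀ u v : J, mul u v = mul v u) {x : J} (hx : mul x = 0) : x = 0 := by
  rw [← he x, hcomm, hx, LinearMap.zero_apply]

theorem eq_zero_of_mul_mem_derivationsKilling (hcomm : ∀ u v : J, mul u v = mul v u) {e : J}
    (he : ∀ v : J, mul e v = v) {x : J} (hx : mul x ∈ derivationsKilling mul e) : x = 0 := by
  rw [← he x, hcomm]
  exact hx.2

theorem eq_zero_of_forall_lie_mul_eq_zero [CharZero K] [FiniteDimensional K J]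
    (hcomm : ∀ u v : J, mul u v = mul v u) {e : J} (he : ∀ v : J, mul e v = v)
    {D : Module.End K J} (hD : D ∈ derivationsKilling mul e)
    (hcent : ∀ x : J, LinearMap.trace K J (mul x) = 0 → ⁅(mul x : Module.End K J), D⁆ = 0) :
    D = 0 := by
  rcases subsingleton_or_nontrivial J with hJ | hJ
  · exact Subsingleton.elim _ _
  have htr_e : LinearMap.trace K J (mul e) ≠ 0 := by
    rw [show (mul e : Module.End K J) = LinearMap.id from LinearMap.ext he, LinearMap.trace_id]
    exact Nat.cast_ne_zero.mpr Module.finrank_pos.ne'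
  have hker : LinearMap.ker ((LinearMap.trace K J).comp mul) ≤ LinearMap.ker D := fun x hx =>
    eq_zero_of_mul_eq_zero he hcomm <| by
      rw [← hD.1 x, ← lie_skew, hcent x hx, neg_zero]
  rw [← LinearMap.ker_eq_top, eq_top_iff,
    ← LinearMap.span_singleton_sup_ker_eq_top ((LinearMap.trace K J).comp mul) htr_e]
  exact sup_le ((Submodule.span_singleton_le_iff_mem _ _).mpr hD.2) hker

end JordanAlgebra

theorem statement12_general
    (J : Type*) [AddCommGroup J] [Module ℝ J] [FiniteDimensional ℝ J]
    (mul : J →ₗ[ℝ] J →ₗ[ℝ] J)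
    (hcomm : ∀ u v : J, mul u v = mul v u)
    (hjordan : ∀ u v : J, mul u (mul (mul u u) v) = mul (mul u u) (mul u v))
    (e : J) (he : ∀ v : J, mul e v = v)
    (V₀ : Submodule ℝ J)
    (hV₀ : ∀ u : J, u ∈ V₀ ↔ LinearMap.trace ℝ J (mul u) = 0)
    (𝔨 : LieSubalgebra ℝ (Module.End ℝ J))
    (h𝔨 : 𝔨 = LieSubalgebra.lieSpan ℝ (Module.End ℝ J)
        {f : Module.End ℝ J | ∃ X ∈ V₀, ∃ Y ∈ V₀,
          f = ⁅(mul X : Module.End ℝ J), (mul Y : Module.End ℝ J)⁆})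
    (𝔭 : Submodule ℝ (Module.End ℝ J))
    (h𝔭 : ∀ f : Module.End ℝ J, f ∈ 𝔭 ↔ ∃ X ∈ V₀, f = mul X)
    (𝔤 : Submodule ℝ (Module.End ℝ J))
    (h𝔤 : ∀ f : Module.End ℝ J, f ∈ 𝔤 ↔ ∃ k ∈ 𝔨, ∃ p ∈ 𝔭, f = k + p) :
    (∀ f ∈ 𝔤, ∀ g ∈ 𝔤, ⁅f, g⁆ ∈ 𝔤) ∧
    (∀ k ∈ 𝔨, ∀ p ∈ 𝔭, ⁅k, p⁆ ∈ 𝔭) ∧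
    (∀ p ∈ 𝔭, ∀ q ∈ 𝔭, ⁅p, q⁆ ∈ 𝔨) ∧
    (∀ f : Module.End ℝ J, f ∈ 𝔨 → f ∈ 𝔭 → f = 0) ∧
    (∀ 𝔥 : Submodule ℝ (Module.End ℝ J), 𝔥 ≤ 𝔤 →
      (∀ h ∈ 𝔥, h ∈ 𝔨) → (∀ f ∈ 𝔤, ∀ h ∈ 𝔥, ⁅f, h⁆ ∈ 𝔥) → 𝔥 = ⊥) := by
  have h𝔤_eq : 𝔤 = 𝔨.toSubmodule ⊔ 𝔭 := by
    ext f
    rw [h𝔤, Submodule.mem_sup]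
    simp only [LieSubalgebra.mem_toSubmodule, eq_comm]
  subst h𝔤_eq
  have h𝔨_le : 𝔨 ≤ derivationsKilling mul e := by
    rw [h𝔨, LieSubalgebra.lieSpan_le]
    rintro _ ⟨X, -, Y, -, rfl⟩
    exact lie_mul_mem_derivationsKilling hcomm hjordan he X Y
  have hkp : ∀ k ∈ 𝔨, ∀ p ∈ 𝔭, ⁅k, p⁆ ∈ 𝔭 := by
    rintro k hk _ hp
    obtain ⟨X, -, rfl⟩ := (h𝔭 _).mp hp
    rw [(h𝔨_le hk).1 X]
    exact (h𝔭 _).mpr ⟨k X, (hV₀ _).mpr (trace_mul_apply_eq_zero (h𝔨_le hk) X), rfl⟩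
  have hpp : ∀ p ∈ 𝔭, ∀ q ∈ 𝔭, ⁅p, q⁆ ∈ 𝔨 := by
    rintro _ hp _ hq
    obtain ⟨X, hX, rfl⟩ := (h𝔭 _).mp hp
    obtain ⟨Y, hY, rfl⟩ := (h𝔭 _).mp hq
    exact h𝔨 ▸ LieSubalgebra.subset_lieSpan ⟨X, hX, Y, hY, rfl⟩
  have hdisj : ∀ f : Module.End ℝ J, f ∈ 𝔨 → f ∈ 𝔭 → f = 0 := by
    rintro _ hk hp
    obtain ⟨X, -, rfl⟩ := (h𝔭 _).mp hp
    rw [eq_zero_of_mul_mem_derivationsKilling hcomm he (h𝔨_le hk), map_zero]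
  have hcent : ∀ k ∈ 𝔨, (∀ p ∈ 𝔭, ⁅p, k⁆ = 0) → k = 0 := fun k hk hk𝔭 =>
    eq_zero_of_forall_lie_mul_eq_zero hcomm he (h𝔨_le hk) fun X hX =>
      hk𝔭 _ ((h𝔭 _).mpr ⟨X, (hV₀ X).mpr hX, rfl⟩)
  exact ⟨fun f hf g hg => lie_mem_sup_of_lie_mem hkp hpp hf hg, hkp, hpp, hdisj,
    fun 𝔥 _ h𝔥k h𝔥 => eq_bot_of_forall_mem_of_lie_mem hkp hdisj hcent h𝔥k h𝔥⟩

/-- For a finite-dimensional semisimple unital real commutative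
Jordan algebra, with `V₀ = {u : tr L_u = 0}`, `𝔭 = {L_X : X ∈ V₀}`, 𝔨 the Lie
subalgebra generated by `{⁅L_X,L_Y⁆ : X,Y ∈ V₀}` and `𝔤 = 𝔨 + 𝔭` (the restricted
structure Lie algebra): 𝔤 is a Lie subalgebra of `gl(J)` with `⁅𝔨,𝔭⁆ ⊆ 𝔭`,
`⁅𝔭,𝔭⁆ ⊆ 𝔨` and `𝔨 ∩ 𝔭 = {0}`, so `(𝔤,𝔨)` is a symmetric pair; moreover the pair
is effective: every Lie ideal of 𝔤 contained in 𝔨 is zero. -/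
theorem statement12
    (J : Type*) [AddCommGroup J] [Module ℝ J] [FiniteDimensional ℝ J]
    (mul : J →ₗ[ℝ] J →ₗ[ℝ] J)
    (hcomm : ∀ u v : J, mul u v = mul v u)
    (hjordan : ∀ u v : J, mul u (mul (mul u u) v) = mul (mul u u) (mul u v))
    (e : J) (he : ∀ v : J, mul e v = v)
    (hss : ∀ u : J, (∀ v : J, LinearMap.trace ℝ J (mul (mul u v)) = 0) → u = 0)
    (V₀ : Submodule ℝ J)
    (hV₀ : ∀ u : J, u ∈ V₀ ↔ LinearMap.trace ℝ J (mul u) = 0)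
    (𝔨 : LieSubalgebra ℝ (Module.End ℝ J))
    (h𝔨 : 𝔨 = LieSubalgebra.lieSpan ℝ (Module.End ℝ J)
        {f : Module.End ℝ J | ∃ X ∈ V₀, ∃ Y ∈ V₀,
          f = ⁅(mul X : Module.End ℝ J), (mul Y : Module.End ℝ J)⁆})
    (𝔭 : Submodule ℝ (Module.End ℝ J))
    (h𝔭 : ∀ f : Module.End ℝ J, f ∈ 𝔭 ↔ ∃ X ∈ V₀, f = mul X)
    (𝔤 : Submodule ℝ (Module.End ℝ J))
    (h𝔤 : ∀ f : Module.End ℝ J, f ∈ 𝔤 ↔ ∃ k ∈ 𝔨, ∃ p ∈ 𝔭, f = k + p) :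
    (∀ f ∈ 𝔤, ∀ g ∈ 𝔤, ⁅f, g⁆ ∈ 𝔤) ∧
    (∀ k ∈ 𝔨, ∀ p ∈ 𝔭, ⁅k, p⁆ ∈ 𝔭) ∧
    (∀ p ∈ 𝔭, ∀ q ∈ 𝔭, ⁅p, q⁆ ∈ 𝔨) ∧
    (∀ f : Module.End ℝ J, f ∈ 𝔨 → f ∈ 𝔭 → f = 0) ∧
    (∀ 𝔥 : Submodule ℝ (Module.End ℝ J), 𝔥 ≤ 𝔤 →
      (∀ h ∈ 𝔥, h ∈ 𝔨) → (∀ f ∈ 𝔤, ∀ h ∈ 𝔥, ⁅f, h⁆ ∈ 𝔥) → 𝔥 = ⊥) :=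
  statement12_general J mul hcomm hjordan e he V₀ hV₀ 𝔨 h𝔨 𝔭 h𝔭 𝔤 h𝔤
end

section
/- Let J be a finite-dimensional semisimple real commutative Jordan algebra with unity e and dim J = n+1, V₀ := {u ∈ J : tr(L_u) = 0}, and for X,Y ∈ V₀ define A₀(X,Y) := X∘Y − (tr(L_{X∘Y})/(n+1))·e. Then for all X,Y ∈ V₀ one has A₀(X,Y) ∈ V₀ (so each A₀(X) := A₀(X,·) is an endomorphism of V₀), and for every X ∈ V₀ the endomorphism A₀(X) of V₀ is traceless: tr(A₀(X)) = 0 (apolarity). -/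
/-!
Since `L_e = id` has trace `n + 1`, the map `P u = u - (tr L_u / (n + 1)) e` is a projection of `J`
onto `V₀`, and `A₀(X) = P ∘ L_X`. So `A₀(X)` maps all of `J` into `V₀`, and its trace on `V₀` is its
trace on `J`. There `P ∘ L_X` is `L_X` minus a rank-one map whose trace is
`tr L_{X∘e} / (n + 1) = tr L_X / (n + 1)`, so both terms vanish when `X ∈ V₀`.
-/

open LinearMap Module

section TracelessProj

variable {K M : Type*} [Field K] [AddCommGroup M] [Module K M]

noncomputable def tracelessProj (mul : M →ₗ[K] M →ₗ[K] M) (e : M) : M →ₗ[K] M :=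
  LinearMap.id - ((finrank K M : K)⁻¹ • (trace K M ∘ₗ mul)).smulRight e

variable (mul : M →ₗ[K] M →ₗ[K] M) {e : M}

theorem tracelessProj_apply (u : M) :
    tracelessProj mul e u = u - (trace K M (mul u) / finrank K M) • e := by
  simp [tracelessProj, div_eq_inv_mul]

theorem trace_mul_tracelessProj [FiniteDimensional K M] (he : ∀ v, mul e v = v)
    (hM : (finrank K M : K) ≠ 0) (u : M) :
    trace K M (mul (tracelessProj mul e u)) = 0 := by
  have htr_e : trace K M (mul e) = finrank K M := by
    rw [show mul e = LinearMap.id from LinearMap.ext he, trace_id]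
  rw [tracelessProj_apply, map_sub, map_smul, map_sub, map_smul, htr_e, smul_eq_mul,
    div_mul_cancel₀ _ hM, sub_self]

theorem trace_tracelessProj_comp_mul [FiniteDimensional K M] (he : ∀ v, mul e v = v)
    (hcomm : ∀ u v, mul u v = mul v u) {X : M} (hX : trace K M (mul X) = 0) :
    trace K M (tracelessProj mul e ∘ₗ mul X) = 0 := by
  have hXe : mul X e = X := by rw [hcomm, he]
  have hrank (φ : M →ₗ[K] K) : φ.smulRight e ∘ₗ mul X = (φ ∘ₗ mul X).smulRight e := rfl
  rw [tracelessProj, sub_comp, id_comp, map_sub, hrank, trace_smulRight]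
  simp [hXe, hX]

end TracelessProj

theorem statement14_general
    (J : Type*) [AddCommGroup J] [Module ℝ J] [FiniteDimensional ℝ J]
    (mul : J →ₗ[ℝ] J →ₗ[ℝ] J)
    (hcomm : ∀ u v : J, mul u v = mul v u)
    (e : J) (he : ∀ v : J, mul e v = v)
    (n : ℕ) (hn : Module.finrank ℝ J = n + 1)
    (V₀ : Submodule ℝ J)
    (hV₀ : ∀ u : J, u ∈ V₀ ↔ LinearMap.trace ℝ J (mul u) = 0)
    (A₀ : J →ₗ[ℝ] J →ₗ[ℝ] J)
    (hA₀ : ∀ X Y : J,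
      A₀ X Y = mul X Y - (LinearMap.trace ℝ J (mul (mul X Y)) / ((n : ℝ) + 1)) • e) :
    (∀ X ∈ V₀, ∀ Y ∈ V₀, A₀ X Y ∈ V₀) ∧
    (∀ X ∈ V₀, ∀ h : ∀ y ∈ V₀, A₀ X y ∈ V₀,
      LinearMap.trace ℝ V₀ ((A₀ X).restrict h) = 0) := by
  have hA : ∀ X, A₀ X = tracelessProj mul e ∘ₗ mul X := fun X ↦ LinearMap.ext fun Y ↦ by
    rw [hA₀, comp_apply, tracelessProj_apply, hn]
    push_cast
    rfl
  have hmem : ∀ X Y, A₀ X Y ∈ V₀ := fun X Y ↦ by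
    rw [hV₀, hA, comp_apply]
    exact trace_mul_tracelessProj mul he (by rw [hn]; positivity) _
  refine ⟨fun X _ Y _ ↦ hmem X Y, fun X hX h ↦ ?_⟩
  rw [trace_restrict_eq_of_forall_mem V₀ _ (hmem X), hA]
  exact trace_tracelessProj_comp_mul mul he hcomm ((hV₀ X).1 hX)

/-- In a finite-dimensional semisimple unital real commutative
Jordan algebra of dimension `n+1`, with `A₀(X,Y) = X∘Y - (tr L_{X∘Y}/(n+1))·e`,
for `X,Y ∈ V₀ = {u : tr L_u = 0}` one has `A₀(X,Y) ∈ V₀`, and for every `X ∈ V₀`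
the endomorphism `A₀(X) : V₀ → V₀` is traceless (apolarity). -/
theorem statement14
    (J : Type*) [AddCommGroup J] [Module ℝ J] [FiniteDimensional ℝ J]
    (mul : J →ₗ[ℝ] J →ₗ[ℝ] J)
    (hcomm : ∀ u v : J, mul u v = mul v u)
    (hjordan : ∀ u v : J, mul u (mul (mul u u) v) = mul (mul u u) (mul u v))
    (e : J) (he : ∀ v : J, mul e v = v)
    (hss : ∀ u : J, (∀ v : J, LinearMap.trace ℝ J (mul (mul u v)) = 0) → u = 0)
    (n : ℕ) (hn : Module.finrank ℝ J = n + 1)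
    (V₀ : Submodule ℝ J)
    (hV₀ : ∀ u : J, u ∈ V₀ ↔ LinearMap.trace ℝ J (mul u) = 0)
    (A₀ : J →ₗ[ℝ] J →ₗ[ℝ] J)
    (hA₀ : ∀ X Y : J,
      A₀ X Y = mul X Y - (LinearMap.trace ℝ J (mul (mul X Y)) / ((n : ℝ) + 1)) • e) :
    (∀ X ∈ V₀, ∀ Y ∈ V₀, A₀ X Y ∈ V₀) ∧
    (∀ X ∈ V₀, ∀ h : ∀ y ∈ V₀, A₀ X y ∈ V₀,
      LinearMap.trace ℝ V₀ ((A₀ X).restrict h) = 0) :=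
  statement14_general J mul hcomm e he n hn V₀ hV₀ A₀ hA₀
end

section
/- Under these hypotheses, the bracket on 𝔤 = 𝔨 × V₀ defined by ⁅(Φ,X), (Ψ,Y)⁆ := (⁅Φ,Ψ⁆ − R(X,Y), Φ(Y) − Ψ(X)) is bilinear, skew-symmetric, and satisfies the Jacobi identity ⁅Z₁,⁅Z₂,Z₃⁆⁆ + ⁅Z₂,⁅Z₃,Z₁⁆⁆ + ⁅Z₃,⁅Z₁,Z₂⁆⁆ = 0 for all Z₁,Z₂,Z₃ ∈ 𝔤; hence 𝔤 is a real Lie algebra containing 𝔨 × {0} as a Lie subalgebra. -/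
/-!
Condition (iii) says that each `R X Y` acts as a derivation of `R`. Derivations of `R` form a
Lie subalgebra of `gl(V₀)`, so every `Φ ∈ 𝔨` is one. In the `𝔨`-component of the Jacobi sum this
derivation rule, followed by skew-symmetry of `R`, cancels all terms except the Jacobi sum of `𝔨`;
the `V₀`-component reduces to the first Bianchi identity.
-/

attribute [local instance 100] LieRing.ofAssociativeRing

section

variable {K V : Type*} [CommRing K] [AddCommGroup V] [Module K V]

def curvatureDerivations (R : V →ₗ[K] V →ₗ[K] Module.End K V) :
    LieSubalgebra K (Module.End K V) where
  carrier := {f | ∀ Y Z, ⁅f, R Y Z⁆ = R (f Y) Z + R Y (f Z)}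
  add_mem' {f g} hf hg Y Z := by
    simp only [add_lie, LinearMap.add_apply, map_add, hf Y Z, hg Y Z]
    abel
  zero_mem' Y Z := by simp
  smul_mem' a f hf Y Z := by
    simp only [smul_lie, LinearMap.smul_apply, map_smul, hf Y Z, smul_add]
  lie_mem' {f g} hf hg Y Z := by
    rw [lie_lie, hf, hg, lie_add, lie_add, hf, hg, hf, hg]
    simp only [Ring.lie_def, LinearMap.sub_apply, Module.End.mul_apply, map_sub]
    abel

@[simp]
theorem mem_curvatureDerivations {R : V →ₗ[K] V →ₗ[K] Module.End K V} {f : Module.End K V} :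
    f ∈ curvatureDerivations R ↔ ∀ Y Z, ⁅f, R Y Z⁆ = R (f Y) Z + R Y (f Z) :=
  Iff.rfl

theorem lieSpan_le_curvatureDerivations (R : V →ₗ[K] V →ₗ[K] Module.End K V)
    (hder : ∀ X Y Z W, ⁅R X Y, R Z W⁆ = R (R X Y Z) W + R Z (R X Y W)) :
    LieSubalgebra.lieSpan K (Module.End K V) {f | ∃ X Y, f = R X Y} ≤ curvatureDerivations R :=
  LieSubalgebra.lieSpan_le.mpr fun _ ⟨X, Y, hf⟩ Z W => hf ▸ hder X Y Z W

variable {R : V →ₗ[K] V →ₗ[K] Module.End K V} (𝔨 : LieSubalgebra K (Module.End K V))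
  (hmem : ∀ X Y, R X Y ∈ 𝔨)

def curvatureBracket (Z W : 𝔨 × V) : 𝔨 × V :=
  (⁅Z.1, W.1⁆ - ⟨R Z.2 W.2, hmem _ _⟩, (Z.1 : Module.End K V) W.2 - (W.1 : Module.End K V) Z.2)

theorem curvatureBracket_smul_add_left (a : K) (Z Z' W : 𝔨 × V) :
    curvatureBracket 𝔨 hmem (a • Z + Z') W
      = a • curvatureBracket 𝔨 hmem Z W + curvatureBracket 𝔨 hmem Z' W := by
  refine Prod.ext (Subtype.ext ?_) ?_
  · simp only [curvatureBracket, Prod.fst_add, Prod.smul_fst, Prod.snd_add, Prod.smul_snd,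
      add_lie, smul_lie, map_add, map_smul, LinearMap.add_apply, LinearMap.smul_apply,
      AddMemClass.coe_add, SetLike.val_smul, AddSubgroupClass.coe_sub, LieSubalgebra.coe_bracket]
    module
  · simp only [curvatureBracket, Prod.fst_add, Prod.smul_fst, Prod.snd_add, Prod.smul_snd,
      map_add, map_smul, LinearMap.add_apply, LinearMap.smul_apply, AddMemClass.coe_add,
      SetLike.val_smul]
    module

variable {𝔨 hmem}

theorem curvatureBracket_swap (hskew : ∀ X Y, R X Y = -R Y X) (Z W : 𝔨 × V) :
    curvatureBracket 𝔨 hmem Z W = -curvatureBracket 𝔨 hmem W Z := by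
  refine Prod.ext (Subtype.ext ?_) (neg_sub _ _).symm
  simp only [curvatureBracket, hskew W.2 Z.2, ← lie_skew Z.1 W.1, Prod.fst_neg,
    AddSubgroupClass.coe_sub, NegMemClass.coe_neg, neg_sub]
  abel

theorem curvatureBracket_smul_add_right (hskew : ∀ X Y, R X Y = -R Y X) (a : K)
    (Z W W' : 𝔨 × V) :
    curvatureBracket 𝔨 hmem Z (a • W + W')
      = a • curvatureBracket 𝔨 hmem Z W + curvatureBracket 𝔨 hmem Z W' := by
  simp only [curvatureBracket_swap hskew Z, curvatureBracket_smul_add_left, neg_add, smul_neg]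

theorem curvatureBracket_jacobi (hskew : ∀ X Y, R X Y = -R Y X)
    (hbianchi : ∀ X Y Z, R X Y Z + R Y Z X + R Z X Y = 0) (h𝔨 : 𝔨 ≤ curvatureDerivations R)
    (Z₁ Z₂ Z₃ : 𝔨 × V) :
    curvatureBracket 𝔨 hmem Z₁ (curvatureBracket 𝔨 hmem Z₂ Z₃)
      + curvatureBracket 𝔨 hmem Z₂ (curvatureBracket 𝔨 hmem Z₃ Z₁)
      + curvatureBracket 𝔨 hmem Z₃ (curvatureBracket 𝔨 hmem Z₁ Z₂) = 0 := by
  obtain ⟨⟨Φ, hΦ⟩, X⟩ := Z₁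
  obtain ⟨⟨Ψ, hΨ⟩, Y⟩ := Z₂
  obtain ⟨⟨Θ, hΘ⟩, Z⟩ := Z₃
  have hΦR := mem_curvatureDerivations.mp (h𝔨 hΦ)
  have hΨR := mem_curvatureDerivations.mp (h𝔨 hΨ)
  have hΘR := mem_curvatureDerivations.mp (h𝔨 hΘ)
  refine Prod.ext (Subtype.ext ?_) ?_
  · simp only [curvatureBracket, LieSubalgebra.coe_bracket, AddSubgroupClass.coe_sub,
      AddMemClass.coe_add, ZeroMemClass.coe_zero, Prod.fst_add, Prod.fst_zero, lie_sub, map_sub]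
    rw [hΦR, hΨR, hΘR, hskew (Φ Y) Z, hskew (Ψ Z) X, hskew (Θ X) Y]
    linear_combination (norm := abel) lie_jacobi Φ Ψ Θ
  · simp only [curvatureBracket, LieSubalgebra.coe_bracket, Ring.lie_def, AddSubgroupClass.coe_sub,
      LinearMap.sub_apply, Module.End.mul_apply, map_sub, Prod.snd_add, Prod.snd_zero]
    linear_combination (norm := abel) hbianchi X Y Z

theorem curvatureBracket_mk_zero_mk_zero (Φ Ψ : 𝔨) :
    curvatureBracket 𝔨 hmem (Φ, 0) (Ψ, 0) = (⁅Φ, Ψ⁆, 0) := by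
  ext <;> simp [curvatureBracket]

end

/-- Given a curvature-like map `R` on `V₀` and 𝔨 the Lie subalgebra
of `gl(V₀)` generated by the `R(X,Y)`, the bracket on `𝔤 = 𝔨 × V₀` defined by
`⁅(Φ,X),(Ψ,Y)⁆ = (⁅Φ,Ψ⁆ - R(X,Y), Φ(Y) - Ψ(X))` is bilinear, skew-symmetric and
satisfies the Jacobi identity; hence 𝔤 is a real Lie algebra containing `𝔨 × {0}`
as a Lie subalgebra. -/
theorem statement15
    (V₀ : Type*) [AddCommGroup V₀] [Module ℝ V₀]
    (R : V₀ →ₗ[ℝ] V₀ →ₗ[ℝ] Module.End ℝ V₀)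
    (hskew : ∀ X Y : V₀, R X Y = -R Y X)
    (hbianchi : ∀ X Y Z : V₀, R X Y Z + R Y Z X + R Z X Y = 0)
    (hder : ∀ X Y Z W : V₀,
      ⁅R X Y, R Z W⁆ = R (R X Y Z) W + R Z (R X Y W))
    (𝔨 : LieSubalgebra ℝ (Module.End ℝ V₀))
    (h𝔨 : 𝔨 = LieSubalgebra.lieSpan ℝ (Module.End ℝ V₀)
        {f : Module.End ℝ V₀ | ∃ X Y : V₀, f = R X Y})
    (hmem : ∀ X Y : V₀, R X Y ∈ 𝔨)
    (br : (↥𝔨 × V₀) → (↥𝔨 × V₀) → (↥𝔨 × V₀))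
    (hbr : ∀ (Φ Ψ : ↥𝔨) (X Y : V₀),
      br (Φ, X) (Ψ, Y)
        = (⁅Φ, Ψ⁆ - ⟨R X Y, hmem X Y⟩,
           (Φ : Module.End ℝ V₀) Y - (Ψ : Module.End ℝ V₀) X)) :
    (∀ (a : ℝ) (Z₁ Z₁' Z₂ : ↥𝔨 × V₀),
      br (a • Z₁ + Z₁') Z₂ = a • br Z₁ Z₂ + br Z₁' Z₂) ∧
    (∀ (a : ℝ) (Z₁ Z₂ Z₂' : ↥𝔨 × V₀),
      br Z₁ (a • Z₂ + Z₂') = a • br Z₁ Z₂ + br Z₁ Z₂') ∧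
    (∀ Z₁ Z₂ : ↥𝔨 × V₀, br Z₁ Z₂ = -br Z₂ Z₁) ∧
    (∀ Z₁ Z₂ Z₃ : ↥𝔨 × V₀,
      br Z₁ (br Z₂ Z₃) + br Z₂ (br Z₃ Z₁) + br Z₃ (br Z₁ Z₂) = 0) ∧
    (∀ Φ Ψ : ↥𝔨, br (Φ, (0 : V₀)) (Ψ, (0 : V₀)) = (⁅Φ, Ψ⁆, (0 : V₀))) := by
  have hbr' : br = curvatureBracket 𝔨 hmem := funext₂ fun Z W => hbr Z.1 W.1 Z.2 W.2
  have h𝔨R : 𝔨 ≤ curvatureDerivations R := h𝔨 ▸ lieSpan_le_curvatureDerivations R hder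
  subst hbr'
  exact ⟨curvatureBracket_smul_add_left 𝔨 hmem, curvatureBracket_smul_add_right hskew,
    curvatureBracket_swap hskew, curvatureBracket_jacobi hskew hbianchi h𝔨R,
    curvatureBracket_mk_zero_mk_zero⟩
end

section
/- Under these hypotheses, the Lie algebra 𝔤 = 𝔨 × V₀ with bracket ⁅(Φ,X), (Ψ,Y)⁆ := (⁅Φ,Ψ⁆ − R(X,Y), Φ(Y) − Ψ(X)) is effective relative to 𝔨: every Lie ideal 𝔥 of 𝔤 with 𝔥 ⊆ 𝔨 × {0} is zero. -/
attribute [local instance] LieRing.ofAssociativeRing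

theorem statement17_general
    (V₀ : Type*) [AddCommGroup V₀] [Module ℝ V₀]
    (R : V₀ →ₗ[ℝ] V₀ →ₗ[ℝ] Module.End ℝ V₀)
    (𝔨 : LieSubalgebra ℝ (Module.End ℝ V₀))
    (hmem : ∀ X Y : V₀, R X Y ∈ 𝔨)
    (br : (↥𝔨 × V₀) → (↥𝔨 × V₀) → (↥𝔨 × V₀))
    (hbr : ∀ (Φ Ψ : ↥𝔨) (X Y : V₀),
      br (Φ, X) (Ψ, Y)
        = (⁅Φ, Ψ⁆ - ⟨R X Y, hmem X Y⟩,
           (Φ : Module.End ℝ V₀) Y - (Ψ : Module.End ℝ V₀) X)) :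
    ∀ 𝔥 : Submodule ℝ (↥𝔨 × V₀),
      (∀ z ∈ 𝔥, z.2 = 0) →
      (∀ g : ↥𝔨 × V₀, ∀ h ∈ 𝔥, br g h ∈ 𝔥) →
      𝔥 = ⊥ := by
  intro 𝔥 hsub hideal
  refine (Submodule.eq_bot_iff 𝔥).2 fun ⟨Φ, Y⟩ hz => ?_
  obtain rfl : Y = 0 := hsub _ hz
  -- `𝔨` acts faithfully on `V₀`: bracketing with `(0, X)` exposes `-Φ X` in the `V₀`-component.
  have hΦ : Φ = 0 := Subtype.ext <| LinearMap.ext fun X => by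
    have h := hsub _ (hideal (0, X) _ hz)
    rw [hbr] at h
    simpa using h
  rw [hΦ, Prod.mk_zero_zero]

/-- The Lie algebra `𝔤 = 𝔨 × V₀` with bracket
`⁅(Φ,X),(Ψ,Y)⁆ = (⁅Φ,Ψ⁆ - R(X,Y), Φ(Y) - Ψ(X))` is effective relative to 𝔨:
every Lie ideal 𝔥 of 𝔤 contained in `𝔨 × {0}` is zero. -/
theorem statement17
    (V₀ : Type*) [AddCommGroup V₀] [Module ℝ V₀]
    (R : V₀ →ₗ[ℝ] V₀ →ₗ[ℝ] Module.End ℝ V₀)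
    (hskew : ∀ X Y : V₀, R X Y = -R Y X)
    (hbianchi : ∀ X Y Z : V₀, R X Y Z + R Y Z X + R Z X Y = 0)
    (hder : ∀ X Y Z W : V₀,
      ⁅R X Y, R Z W⁆ = R (R X Y Z) W + R Z (R X Y W))
    (𝔨 : LieSubalgebra ℝ (Module.End ℝ V₀))
    (h𝔨 : 𝔨 = LieSubalgebra.lieSpan ℝ (Module.End ℝ V₀)
        {f : Module.End ℝ V₀ | ∃ X Y : V₀, f = R X Y})
    (hmem : ∀ X Y : V₀, R X Y ∈ 𝔨)
    (br : (↥𝔨 × V₀) → (↥𝔨 × V₀) → (↥𝔨 × V₀))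
    (hbr : ∀ (Φ Ψ : ↥𝔨) (X Y : V₀),
      br (Φ, X) (Ψ, Y)
        = (⁅Φ, Ψ⁆ - ⟨R X Y, hmem X Y⟩,
           (Φ : Module.End ℝ V₀) Y - (Ψ : Module.End ℝ V₀) X)) :
    ∀ 𝔥 : Submodule ℝ (↥𝔨 × V₀),
      (∀ z ∈ 𝔥, z.2 = 0) →
      (∀ g : ↥𝔨 × V₀, ∀ h ∈ 𝔥, br g h ∈ 𝔥) →
      𝔥 = ⊥ :=
  statement17_general V₀ R 𝔨 hmem br hbr
end
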